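/- arXiv:2605.10113 — 4 statements merged into one kernel-verified Lean document; each statement's English description precedes it below -/
import Mathlib

section
/- If y ∈ ℚ⟦z⟧ is a power series with constant term 1 satisfying (z³ − z²)y² + (1 − 3z + 2z²)y + (2z − 1) = 0, then its coefficient sequence m(n) = [zⁿ] y satisfies the holonomic recurrence 4(n+1)·m(n) + 4·m(n+1) − (9n+32)·m(n+2) + 2(3n+14)·m(n+3) − (n+6)·m(n+4) = 0 for all n ≥ 0, together with m(0)=1, m(1)=1, m(2)=2, m(3)=5. -/
/-!
Differentiating the quadratic equation and eliminating `y²` between the equation and its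
derivative shows that `y` satisfies a first-order linear differential equation with polynomial
coefficients. Comparing the coefficients of `z^(n+4)` in it gives the recurrence, and comparing
those of `z⁰, …, z³` gives the initial values.
-/

namespace PowerSeries

variable {R : Type*}

theorem coeff_ofNat [Semiring R] (a n : ℕ) [a.AtLeastTwo] :
    coeff n (ofNat(a) : R⟦X⟧) = if n = 0 then ofNat(a) else 0 := by
  rw [← map_ofNat (C (R := R)), coeff_C]

theorem coeff_ofNat_mul [Semiring R] (a n : ℕ) [a.AtLeastTwo] (f : R⟦X⟧) :
    coeff n ((ofNat(a) : R⟦X⟧) * f) = ofNat(a) * coeff n f := by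
  rw [← map_ofNat (C (R := R)), coeff_C_mul]

theorem derivative_ofNat [CommSemiring R] (a : ℕ) [a.AtLeastTwo] :
    d⁄dX R (ofNat(a) : R⟦X⟧) = 0 := by
  rw [← map_ofNat (C (R := R)), derivative_C]

theorem coeff_X_mul_derivative [CommSemiring R] (f : R⟦X⟧) (n : ℕ) :
    coeff n (X * d⁄dX R f) = n * coeff n f := by
  cases n with
  | zero => simp
  | succ n => rw [coeff_succ_X_mul, coeff_derivative]; push_cast; ring

end PowerSeries

section

open PowerSeries

def SatisfiesODE (y : ℚ⟦X⟧) : Prop :=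
  (4 * X ^ 4 - 9 * X ^ 2 + 6 * X - 1) * (X * d⁄dX ℚ y)
    + (4 * X ^ 4 + 4 * X ^ 3 - 14 * X ^ 2 + 10 * X - 2) * y + (6 * X ^ 2 - 7 * X + 2) = 0

theorem satisfiesODE_of_eq {y : ℚ⟦X⟧}
    (h : (X ^ 3 - X ^ 2) * y ^ 2 + (1 - 3 * X + 2 * X ^ 2) * y + (2 * X - 1) = 0) :
    SatisfiesODE y := by
  set y' := d⁄dX ℚ y
  have hderiv : (3 * X ^ 2 - 2 * X) * y ^ 2 + (X ^ 3 - X ^ 2) * (2 * y * y')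
      + (4 * X - 3) * y + (1 - 3 * X + 2 * X ^ 2) * y' + 2 = 0 := by
    have := congrArg (d⁄dX ℚ) h
    simp only [map_add, map_sub, Derivation.leibniz, Derivation.leibniz_pow, Nat.add_one_sub_one,
      pow_one, smul_eq_mul, nsmul_eq_mul, Nat.cast_ofNat, derivative_X, mul_one,
      Derivation.map_one_eq_zero, derivative_ofNat, mul_zero, add_zero, zero_sub, sub_zero,
      map_zero] at this
    linear_combination this
  unfold SatisfiesODE
  -- the cofactors are chosen so that every term of degree at least 2 in `y, y'` cancels
  linear_combination (4 * X * (X ^ 3 - X ^ 2) * y' + (6 * X ^ 3 - 4 * X ^ 2) * y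
        + (2 * X ^ 2 + X - 2)) * h
      - (X * (2 * (X ^ 3 - X ^ 2) * y + 1 - 3 * X + 2 * X ^ 2)) * hderiv

theorem SatisfiesODE.coeff_recurrence {y : ℚ⟦X⟧} (h : SatisfiesODE y) (n : ℕ) :
    4 * (n + 1 : ℚ) * coeff n y + 4 * coeff (n + 1) y
      - (9 * n + 32) * coeff (n + 2) y + 2 * (3 * n + 14) * coeff (n + 3) y
      - (n + 6) * coeff (n + 4) y = 0 := by
  have := congrArg (coeff (n + 4)) h
  simp only [sub_mul, add_mul, mul_assoc, one_mul, map_add, map_sub, coeff_ofNat_mul,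
    coeff_X_pow_mul', le_add_iff_nonneg_left, zero_le, ↓reduceIte, add_tsub_cancel_right,
    coeff_X_mul_derivative, Nat.reduceSubDiff, coeff_succ_X_mul, coeff_derivative, Nat.cast_add,
    Nat.cast_one, Nat.cast_ofNat, coeff_X_pow, Nat.reduceEqDiff, mul_zero, coeff_X, sub_self,
    coeff_ofNat, Nat.add_eq_zero_iff, OfNat.ofNat_ne_zero, and_false, add_zero, map_zero] at this
  linear_combination this

theorem SatisfiesODE.initial_coeff {y : ℚ⟦X⟧} (h : SatisfiesODE y) :
    coeff 0 y = 1 ∧ coeff 1 y = 1 ∧ coeff 2 y = 2 ∧ coeff 3 y = 5 := by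
  have c0 := congrArg (coeff 0) h
  have c1 := congrArg (coeff 1) h
  have c2 := congrArg (coeff 2) h
  have c3 := congrArg (coeff 3) h
  simp only [sub_mul, add_mul, mul_assoc, one_mul, coeff_zero_eq_constantCoeff, map_add, map_sub,
    map_mul, constantCoeff_X, OfNat.ofNat_ne_zero, zero_mul, mul_zero, sub_self, add_zero, zero_sub,
    zero_add, coeff_ofNat_mul, coeff_X_pow_mul', Nat.not_ofNat_le_one, ↓reduceIte, coeff_succ_X_mul,
    coeff_X_mul_derivative, CharP.cast_eq_zero, coeff_derivative, mul_one, coeff_X_pow,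
    OfNat.one_ne_ofNat, coeff_X, coeff_ofNat, one_ne_zero, map_zero, Nat.reduceLeDiff, le_refl,
    tsub_self, Nat.reduceAdd, Nat.cast_one, OfNat.ofNat_ne_one, sub_zero, Nat.reduceSub,
    Nat.cast_ofNat, Nat.succ_ne_self, OfNat.zero_ne_ofNat, zero_ne_one] at c0 c1 c2 c3
  rw [coeff_zero_eq_constantCoeff_apply]
  exact ⟨by linarith, by linarith, by linarith, by linarith⟩

end

open PowerSeries in
theorem stmt2_general (y : PowerSeries ℚ)
    (h2 : (X ^ 3 - X ^ 2) * y ^ 2 + (1 - 3 * X + 2 * X ^ 2) * y + (2 * X - 1) = 0) :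
    (∀ n : ℕ, 4 * (n + 1 : ℚ) * coeff n y + 4 * coeff (n + 1) y
      - (9 * n + 32) * coeff (n + 2) y + 2 * (3 * n + 14) * coeff (n + 3) y
      - (n + 6) * coeff (n + 4) y = 0) ∧
    coeff 0 y = 1 ∧ coeff 1 y = 1 ∧ coeff 2 y = 2 ∧ coeff 3 y = 5 :=
  have hy := satisfiesODE_of_eq h2
  ⟨hy.coeff_recurrence, hy.initial_coeff⟩

open PowerSeries in
theorem stmt2 (y : PowerSeries ℚ) (h1 : constantCoeff y = 1)
    (h2 : (X ^ 3 - X ^ 2) * y ^ 2 + (1 - 3 * X + 2 * X ^ 2) * y + (2 * X - 1) = 0) :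
    (∀ n : ℕ, 4 * (n + 1 : ℚ) * coeff n y + 4 * coeff (n + 1) y
      - (9 * n + 32) * coeff (n + 2) y + 2 * (3 * n + 14) * coeff (n + 3) y
      - (n + 6) * coeff (n + 4) y = 0) ∧
    coeff 0 y = 1 ∧ coeff 1 y = 1 ∧ coeff 2 y = 2 ∧ coeff 3 y = 5 :=
  stmt2_general y h2
end

section
/- If y ∈ ℚ⟦z⟧ satisfies (z³ − z²)y² + (1 − 3z + 2z²)y + (2z − 1) = 0 with y(0) = 1, then y satisfies the first-order linear inhomogeneous differential equation (6z² − 7z + 2) + (10z − 14z² + 4z³ + 4z⁴ − 2)·y + (4z⁵ − 9z³ + 6z² − z)·y' = 0, where y' denotes the formal derivative. -/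
/-!
Differentiating the quadratic `a y² + b y + c = 0` gives `(2 a y + b) y' = -(a' y² + b' y + c')`.
Multiplying the claimed differential expression by `2 a y + b` and eliminating `y'` with this
identity leaves a multiple of the quadratic, hence zero; and `2 a y + b` is a unit in `ℚ⟦X⟧`
since its constant term is `b(0) = 1`.
-/

theorem Derivation.mul_map_eq_of_quadratic_eq_zero {R A : Type*} [CommRing R] [CommRing A]
    [Algebra R A] (D : Derivation R A A) {a b c y : A} (h : a * y ^ 2 + b * y + c = 0) :
    (2 * a * y + b) * D y = -(D a * y ^ 2 + D b * y + D c) := by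
  have hD := congrArg D h
  simp only [map_add, Derivation.leibniz, Derivation.leibniz_pow, map_zero, smul_eq_mul,
    nsmul_eq_mul] at hD
  linear_combination hD

theorem Derivation.map_ofNat {R A : Type*} [CommSemiring R] [CommSemiring A] [Algebra R A]
    (D : Derivation R A A) (n : ℕ) [n.AtLeastTwo] : D (no_index (OfNat.ofNat n) : A) = 0 :=
  D.map_natCast n

open PowerSeries in
theorem stmt3 (y : PowerSeries ℚ) (h1 : constantCoeff y = 1)
    (h2 : (X ^ 3 - X ^ 2) * y ^ 2 + (1 - 3 * X + 2 * X ^ 2) * y + (2 * X - 1) = 0) :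
    (6 * X ^ 2 - 7 * X + 2) + (10 * X - 14 * X ^ 2 + 4 * X ^ 3 + 4 * X ^ 4 - 2) * y
      + (4 * X ^ 5 - 9 * X ^ 3 + 6 * X ^ 2 - X) * PowerSeries.derivative ℚ y = 0 := by
  have hy' := (derivative ℚ).mul_map_eq_of_quadratic_eq_zero h2
  simp only [map_add, map_sub, Derivation.leibniz, Derivation.leibniz_pow, Derivation.map_ofNat,
    Derivation.map_one_eq_zero, derivative_X, smul_eq_mul, nsmul_eq_mul] at hy'
  have hunit : IsUnit (2 * (X ^ 3 - X ^ 2) * y + (1 - 3 * X + 2 * X ^ 2) : ℚ⟦X⟧) := by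
    simp [isUnit_iff_constantCoeff, h1]
  refine hunit.mul_right_eq_zero.mp ?_
  linear_combination (-4 * X ^ 4 + 4 * X ^ 3 - 5 * X ^ 2 + 7 * X - 2 : ℚ⟦X⟧) * h2
    + (4 * X ^ 5 - 9 * X ^ 3 + 6 * X ^ 2 - X : ℚ⟦X⟧) * hy'
end

section
/- Let W ∈ ℚ⟦z⟧ satisfy W(0)=1 and W² = (1−z)(1−2z)(1−3z−2z²). Then the power series y with 2(1−2z)z²·y = 1 − 3z + 2z² − W satisfies (z² − 2z³)y² − (1 − 3z + 2z²)y + (1 − z) = 0 and has constant term 1. -/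
/-! W is a square root of the discriminant of the quadratic
(X² − 2X³)·t² − (1 − 3X + 2X²)·t + (1 − X), so the defining relation of y is the quadratic formula
`2a·y = −b − W`; clearing the nonzero factor `4a` proves the equation, whose constant coefficient
reads `1 − y(0) = 0`. -/

theorem quadratic_eq_zero_of_two_mul_mul_eq_neg_sub {R : Type*} [CommRing R] [NoZeroDivisors R]
    {a b c s x : R} (h2 : (2 : R) ≠ 0) (ha : a ≠ 0) (hs : discrim a b c = s ^ 2)
    (hx : 2 * a * x = -b - s) : a * x ^ 2 + b * x + c = 0 := by
  have h : (2 * 2 * a) * (a * x ^ 2 + b * x + c) = 0 := by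
    rw [discrim] at hs
    linear_combination (2 * a * x + b - s) * hx - hs
  exact (mul_eq_zero.mp h).resolve_left (mul_ne_zero (mul_ne_zero h2 h2) ha)

open PowerSeries in
theorem stmt14_general (W y : PowerSeries ℚ)
    (hW : W ^ 2 = (1 - X) * (1 - 2 * X) * (1 - 3 * X - 2 * X ^ 2))
    (hy : 2 * (1 - 2 * X) * X ^ 2 * y = 1 - 3 * X + 2 * X ^ 2 - W) :
    (X ^ 2 - 2 * X ^ 3) * y ^ 2 - (1 - 3 * X + 2 * X ^ 2) * y + (1 - X) = 0 ∧
    constantCoeff y = 1 := by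
  have h2 : (2 : PowerSeries ℚ) ≠ 0 := fun h => by
    simpa [← map_ofNat C] using congrArg constantCoeff h
  have ha : (X ^ 2 - 2 * X ^ 3 : PowerSeries ℚ) ≠ 0 := fun h => by
    simpa [coeff_X_pow, ← map_ofNat C, coeff_C_mul] using congrArg (coeff 2) h
  have hquad : (X ^ 2 - 2 * X ^ 3) * y ^ 2 - (1 - 3 * X + 2 * X ^ 2) * y + (1 - X) = 0 := by
    have := quadratic_eq_zero_of_two_mul_mul_eq_neg_sub (b := -(1 - 3 * X + 2 * X ^ 2))
      (c := 1 - X) (x := y) h2 ha (by rw [discrim, hW]; ring) (by linear_combination hy)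
    linear_combination this
  refine ⟨hquad, ?_⟩
  have h0 := congrArg constantCoeff hquad
  simp only [map_add, map_sub, map_mul, map_pow, map_one, map_zero, constantCoeff_X,
    ← map_ofNat C, constantCoeff_C] at h0
  linear_combination -h0

open PowerSeries in
theorem stmt14 (W y : PowerSeries ℚ) (hW0 : constantCoeff W = 1)
    (hW : W ^ 2 = (1 - X) * (1 - 2 * X) * (1 - 3 * X - 2 * X ^ 2))
    (hy : 2 * (1 - 2 * X) * X ^ 2 * y = 1 - 3 * X + 2 * X ^ 2 - W) :
    (X ^ 2 - 2 * X ^ 3) * y ^ 2 - (1 - 3 * X + 2 * X ^ 2) * y + (1 - X) = 0 ∧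
    constantCoeff y = 1 :=
  stmt14_general W y hW hy
end

section
/- For the sequence m : ℕ → ℤ defined by m(0)=1, m(1)=1, m(2)=2, m(3)=5 and the recurrence (n+6)·m(n+4) = 4(n+1)·m(n) + 4·m(n+1) − (9n+32)·m(n+2) + 2(3n+14)·m(n+3), all values m(n) are positive integers, and m(4)=14, m(5)=41, m(6)=123, m(7)=375, m(8)=1158, m(9)=3615. -/
/-!
The sequence is the coefficient sequence of the power series `F` with
`x²(1 - x)F² - (1 - x)(1 - 2x)F + (1 - 2x) = 0`, equivalently
`F = 1 + 2xF - x/(1 - x) + x²F²`. Read coefficientwise, the second form is the convolution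
recurrence `a(n + 2) = 2a(n + 1) - 1 + ∑ a(i)a(n - i)`, so the coefficients are integers and
`a(n) ≥ 1` by induction. Differentiating the quadratic equation and eliminating `F²` gives the
linear differential equation `xΔF' = (1 - 2x)(2 - 3x) - 2(1 - 5x + 7x² - 2x³ - 2x⁴)F`, where
`Δ = (1 - x)(1 - 2x)(1 - 3x - 2x²)` is the discriminant; its coefficients are the holonomic
recurrence, which in turn determines the values `m 4, …, m 9`.
-/

open PowerSeries

theorem PowerSeries.coeff_ofNat_mul_s15 {R : Type*} [Semiring R] (k n : ℕ) [k.AtLeastTwo]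
    (p : R⟦X⟧) : coeff n ((no_index (OfNat.ofNat k) : R⟦X⟧) * p) = OfNat.ofNat k * coeff n p := by
  rw [← map_ofNat C k, coeff_C_mul]

theorem PowerSeries.coeff_X_mul_derivative_s15 {R : Type*} [CommSemiring R] (f : R⟦X⟧) (n : ℕ) :
    coeff n (X * d⁄dX R f) = coeff n f * n := by
  rcases n with _ | n
  · simp
  · simp [coeff_derivative]

theorem values_four_to_nine_of_recurrence (m : ℕ → ℤ) (h0 : m 0 = 1) (h1 : m 1 = 1)
    (h2 : m 2 = 2) (h3 : m 3 = 5)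
    (hrec : ∀ n : ℕ, ((n : ℤ) + 6) * m (n + 4)
      = 4 * ((n : ℤ) + 1) * m n + 4 * m (n + 1) - (9 * (n : ℤ) + 32) * m (n + 2)
        + 2 * (3 * (n : ℤ) + 14) * m (n + 3)) :
    m 4 = 14 ∧ m 5 = 41 ∧ m 6 = 123 ∧ m 7 = 375 ∧ m 8 = 1158 ∧ m 9 = 3615 := by
  have h4 : m 4 = 14 := by have := hrec 0; norm_num [h0, h1, h2, h3] at this; omega
  have h5 : m 5 = 41 := by have := hrec 1; norm_num [h1, h2, h3, h4] at this; omega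
  have h6 : m 6 = 123 := by have := hrec 2; norm_num [h2, h3, h4, h5] at this; omega
  have h7 : m 7 = 375 := by have := hrec 3; norm_num [h3, h4, h5, h6] at this; omega
  have h8 : m 8 = 1158 := by have := hrec 4; norm_num [h4, h5, h6, h7] at this; omega
  have h9 : m 9 = 3615 := by have := hrec 5; norm_num [h5, h6, h7, h8] at this; omega
  exact ⟨h4, h5, h6, h7, h8, h9⟩

namespace A176677

def seq : ℕ → ℤ
  | 0 => 1
  | 1 => 1
  | n + 2 => 2 * seq (n + 1) - 1 + ∑ i : Fin (n + 1), seq i * seq (n - i)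
  decreasing_by all_goals omega

theorem seq_zero : seq 0 = 1 := by rw [seq]

theorem seq_one : seq 1 = 1 := by rw [seq]

theorem seq_add_two (n : ℕ) :
    seq (n + 2) = 2 * seq (n + 1) - 1 + ∑ i ∈ Finset.range (n + 1), seq i * seq (n - i) := by
  rw [seq, Fin.sum_univ_eq_sum_range (fun i => seq i * seq (n - i))]

theorem seq_two : seq 2 = 2 := by
  simp [seq_add_two, seq_zero, seq_one]

theorem seq_three : seq 3 = 5 := by
  simp [seq_add_two, Finset.sum_range_succ, seq_zero, seq_one]

theorem seq_pos (n : ℕ) : 0 < seq n := by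
  induction n using Nat.strong_induction_on with
  | _ n ih =>
    match n with
    | 0 => simp [seq_zero]
    | 1 => simp [seq_one]
    | n + 2 =>
      have hconv : 0 ≤ ∑ i ∈ Finset.range (n + 1), seq i * seq (n - i) :=
        Finset.sum_nonneg fun i hi =>
          (mul_pos (ih i (by simp at hi; omega)) (ih (n - i) (by omega))).le
      rw [seq_add_two]
      linarith [ih (n + 1) (by omega)]

noncomputable def gf : ℤ⟦X⟧ := mk seq

theorem coeff_gf_sq (n : ℕ) :
    coeff n (gf ^ 2) = ∑ i ∈ Finset.range (n + 1), seq i * seq (n - i) := by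
  rw [sq, coeff_mul, Finset.Nat.sum_antidiagonal_eq_sum_range_succ_mk]
  simp only [gf, coeff_mk]

theorem gf_eq : gf = 1 + 2 * X * gf - X * mk 1 + X ^ 2 * gf ^ 2 := by
  ext n
  simp only [map_add, map_sub, mul_assoc, coeff_ofNat_mul_s15, coeff_X_pow_mul', coeff_gf_sq]
  rcases n with _ | _ | n
  · simp [gf, seq_zero]
  · simp [gf, seq_zero, seq_one]
  · simp [gf, seq_add_two]

theorem gf_quadratic :
    X ^ 2 * (1 - X) * gf ^ 2 - (1 - X) * (1 - 2 * X) * gf + (1 - 2 * X) = 0 := by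
  linear_combination (X - 1) * gf_eq + X * mk_one_mul_one_sub_eq_one ℤ

theorem gf_ode :
    X * d⁄dX ℤ gf * (1 - 6 * X + 9 * X ^ 2 - 4 * X ^ 4)
      = (2 - 7 * X + 6 * X ^ 2) - 2 * (1 - 5 * X + 7 * X ^ 2 - 2 * X ^ 3 - 2 * X ^ 4) * gf := by
  have derivative_ofNat (k : ℕ) [k.AtLeastTwo] : d⁄dX ℤ (OfNat.ofNat k : ℤ⟦X⟧) = 0 := by
    rw [← map_ofNat C k, derivative_C]
  have hderiv := congrArg (d⁄dX ℤ) gf_quadratic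
  simp only [map_add, map_sub, map_zero, Derivation.leibniz, Derivation.leibniz_pow, derivative_X,
    derivative_ofNat, Derivation.map_one_eq_zero, smul_eq_mul, nsmul_eq_mul] at hderiv
  -- Writing the quadratic as `P(x, F) = 0`, multiply its derivative by `x ∂P/∂F`: since
  -- `(∂P/∂F)² = Δ + 4x²(1 - x)P`, this leaves `xΔF'` plus terms that reduce modulo `P`.
  linear_combination (X * (2 * X ^ 2 * (1 - X) * gf - (1 - X) * (1 - 2 * X))) * hderiv
    + (-(4 * X * (X ^ 2 - X ^ 3) * d⁄dX ℤ gf) - 2 * X * (2 * X - 3 * X ^ 2) * gf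
      - (2 - X - 2 * X ^ 2)) * gf_quadratic

theorem seq_recurrence (n : ℕ) :
    ((n : ℤ) + 6) * seq (n + 4)
      = 4 * ((n : ℤ) + 1) * seq n + 4 * seq (n + 1) - (9 * (n : ℤ) + 32) * seq (n + 2)
        + 2 * (3 * (n : ℤ) + 14) * seq (n + 3) := by
  have h := congrArg (coeff (n + 4)) (show
      X * d⁄dX ℤ gf - 6 * (X ^ 1 * (X * d⁄dX ℤ gf)) + 9 * (X ^ 2 * (X * d⁄dX ℤ gf))
          - 4 * (X ^ 4 * (X * d⁄dX ℤ gf))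
        = 2 - 7 * X ^ 1 + 6 * X ^ 2 - 2 * gf + 10 * (X ^ 1 * gf) - 14 * (X ^ 2 * gf)
          + 4 * (X ^ 3 * gf) + 4 * (X ^ 4 * gf) by linear_combination gf_ode)
  simp only [map_add, map_sub, coeff_ofNat_mul_s15, coeff_X_pow_mul', coeff_X_mul_derivative_s15,
    coeff_X_pow, gf, coeff_mk] at h
  rw [← map_ofNat C 2, coeff_C] at h
  push_cast [if_neg (Nat.succ_ne_zero _)] at h
  linear_combination h

end A176677

theorem stmt15 :
    ∃ m : ℕ → ℤ,
      (m 0 = 1 ∧ m 1 = 1 ∧ m 2 = 2 ∧ m 3 = 5 ∧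
        ∀ n : ℕ, ((n : ℤ) + 6) * m (n + 4)
          = 4 * ((n : ℤ) + 1) * m n + 4 * m (n + 1) - (9 * (n : ℤ) + 32) * m (n + 2)
            + 2 * (3 * (n : ℤ) + 14) * m (n + 3)) ∧
      (∀ n : ℕ, 0 < m n) ∧
      m 4 = 14 ∧ m 5 = 41 ∧ m 6 = 123 ∧ m 7 = 375 ∧ m 8 = 1158 ∧ m 9 = 3615 := by
  open A176677 in
  exact ⟨seq, ⟨seq_zero, seq_one, seq_two, seq_three, seq_recurrence⟩, seq_pos,
    values_four_to_nine_of_recurrence seq seq_zero seq_one seq_two seq_three seq_recurrence⟩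
end
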